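/- If u is a unit-distance representation of a connected graph G in ℝ^d attaining 𝓔_p(G;A) < ∞ (A ⪰ 0, p ∈ [1,∞]), then there exists an optimal unit-distance representation v of G in ℝ^d with the same objective value such that the origin lies in the convex hull of {v(i) : i ∈ V}. -/

import Mathlib

/-!
If no point of the convex hull of the `u i` lies in `ker A`, a hyperplane separates the hull
from `ker A`; its normal is orthogonal to `ker A = (range A)ᗮ`, so it equals `A x` for some `x`.
Shifting all `u i` by a small multiple of `x` keeps the unit distances and strictly decreases
every `u iᵀ A u i` (all nonnegative as `A ⪰ 0`), hence strictly decreases the `p`-norm,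
contradicting optimality. So some `w` in the hull has `A w = 0`, and `u - w` has the same
objective value and `0` in its convex hull.
-/

open scoped RealInnerProductSpace

def IsUnitDistRep {V : Type*} (G : SimpleGraph V) {d : ℕ}
    (u : V → EuclideanSpace ℝ (Fin d)) : Prop :=
  ∀ i j, G.Adj i j → ‖u i - u j‖ = 1

def IsHypersphereRep {V : Type*} (G : SimpleGraph V) {d : ℕ}
    (u : V → EuclideanSpace ℝ (Fin d)) (t : ℝ) : Prop :=
  IsUnitDistRep G u ∧ ∀ i, ‖u i‖ ^ 2 = t

noncomputable def hypersphereNumber {V : Type*} (G : SimpleGraph V) : ℝ :=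
  sInf {t | ∃ (d : ℕ) (u : V → EuclideanSpace ℝ (Fin d)), IsHypersphereRep G u t}

open Matrix

open scoped ENNReal

/-- The objective `‖(uᵢᵀ A uᵢ)_{i∈V}‖_p`. -/
noncomputable def objP {V : Type*} [Fintype V] (p : ℝ≥0∞) [Fact (1 ≤ p)] {d : ℕ}
    (A : Matrix (Fin d) (Fin d) ℝ) (u : V → EuclideanSpace ℝ (Fin d)) : ℝ :=
  ‖(WithLp.equiv p (∀ _ : V, ℝ)).symm
    (fun i => dotProduct (WithLp.equiv 2 (Fin d → ℝ) (u i))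
      (A *ᵥ WithLp.equiv 2 (Fin d → ℝ) (u i)))‖

namespace PiLp

variable {ι : Type*} [Fintype ι] {β : ι → Type*} [∀ i, SeminormedAddCommGroup (β i)]
  (p : ℝ≥0∞) [Fact (1 ≤ p)]

theorem norm_le_norm_of_forall_norm_le {x y : PiLp p β} (h : ∀ i, ‖x i‖ ≤ ‖y i‖) :
    ‖x‖ ≤ ‖y‖ := by
  rcases p.dichotomy with rfl | hp
  · rw [norm_eq_ciSup, norm_eq_ciSup]
    cases isEmpty_or_nonempty ι
    · simp
    exact ciSup_mono (Set.finite_range _).bddAbove h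
  · have hp0 : 0 < p.toReal := zero_lt_one.trans_le hp
    rw [norm_eq_sum hp0, norm_eq_sum hp0]
    gcongr with i
    exact h i

theorem norm_lt_norm_of_forall_norm_lt [Nonempty ι] [∀ i, NormedSpace ℝ (β i)] {x y : PiLp p β}
    (h : ∀ i, ‖x i‖ < ‖y i‖) : ‖x‖ < ‖y‖ := by
  set t := Finset.univ.sup' Finset.univ_nonempty fun i => ‖x i‖ / ‖y i‖
  have hy : ∀ i, 0 < ‖y i‖ := fun i => (norm_nonneg _).trans_lt (h i)
  have ht0 : 0 ≤ t := (div_nonneg (norm_nonneg _) (norm_nonneg _)).trans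
    (Finset.le_sup' (fun i => ‖x i‖ / ‖y i‖) (Finset.mem_univ (Classical.arbitrary ι)))
  have ht1 : t < 1 := (Finset.sup'_lt_iff _).2 fun i _ => (div_lt_one (hy i)).2 (h i)
  have hyt : ∀ i, ‖x i‖ ≤ ‖(t • y) i‖ := fun i => by
    rw [smul_apply, norm_smul, Real.norm_of_nonneg ht0, ← div_le_iff₀ (hy i)]
    exact Finset.le_sup' (fun i => ‖x i‖ / ‖y i‖) (Finset.mem_univ i)
  have hy0 : 0 < ‖y‖ := (hy (Classical.arbitrary ι)).trans_le (norm_apply_le y _)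
  calc ‖x‖ ≤ ‖t • y‖ := norm_le_norm_of_forall_norm_le p hyt
    _ = t * ‖y‖ := by rw [norm_smul, Real.norm_of_nonneg ht0]
    _ < ‖y‖ := mul_lt_of_lt_one_left hy0 ht1

end PiLp

theorem exists_mem_orthogonal_forall_inner_lt_of_disjoint {E : Type*}
    [NormedAddCommGroup E] [InnerProductSpace ℝ E] [CompleteSpace E] {K : Set E}
    (hKc : Convex ℝ K) (hK : IsCompact K) {N : Submodule ℝ E} (hN : IsClosed (N : Set E))
    (hKN : Disjoint K N) : ∃ y ∈ Nᗮ, ∃ c < 0, ∀ w ∈ K, ⟪y, w⟫ < c := by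
  obtain ⟨f, c, c', hfK, hcc', hfN⟩ :=
    geometric_hahn_banach_compact_closed hKc hK N.convex hN hKN
  have hc' : c' < 0 := by simpa using hfN 0 N.zero_mem
  have hf : ∀ n ∈ N, f n = 0 := fun n hn => by
    by_contra hfn
    have := hfN (((c' - 1) / f n) • n) (N.smul_mem _ hn)
    rw [map_smul, smul_eq_mul, div_mul_cancel₀ _ hfn] at this
    linarith
  refine ⟨(InnerProductSpace.toDual ℝ E).symm f, fun n hn => ?_, c, hcc'.trans hc', ?_⟩
  · rw [real_inner_comm, InnerProductSpace.toDual_symm_apply, hf n hn]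
  · intro w hw
    rw [InnerProductSpace.toDual_symm_apply]
    exact hfK w hw

section SymmetricForm

variable {E : Type*} [NormedAddCommGroup E] [InnerProductSpace ℝ E] {T : E →ₗ[ℝ] E}

theorem LinearMap.IsSymmetric.inner_map_add_smul (hT : T.IsSymmetric) (v x : E) (s : ℝ) :
    ⟪T (v + s • x), v + s • x⟫ = ⟪T v, v⟫ + s * (2 * ⟪T x, v⟫ + s * ⟪T x, x⟫) := by
  have hvx : ⟪T v, x⟫ = ⟪T x, v⟫ := by rw [hT, real_inner_comm]
  simp only [map_add, map_smul, inner_add_left, inner_add_right, real_inner_smul_left,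
    real_inner_smul_right, hvx]
  ring

theorem LinearMap.IsSymmetric.inner_map_add_of_map_eq_zero (hT : T.IsSymmetric) (v : E)
    {w : E} (hw : T w = 0) : ⟪T (v + w), v + w⟫ = ⟪T v, v⟫ := by
  rw [map_add, hw, add_zero, inner_add_right, hT v w, hw, inner_zero_right, add_zero]

theorem LinearMap.IsSymmetric.exists_forall_inner_map_add_lt_of_forall_inner_lt
    (hT : T.IsSymmetric) {ι : Type*} {u : ι → E} {x : E} {c : ℝ} (hc : c < 0)
    (hu : ∀ i, ⟪T x, u i⟫ < c) :
    ∃ y, ∀ i, ⟪T (u i + y), u i + y⟫ < ⟪T (u i), u i⟫ := by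
  set s := -c / (|⟪T x, x⟫| + 1)
  have hs : 0 < s := div_pos (neg_pos.2 hc) (by positivity)
  have hsx : s * ⟪T x, x⟫ < -c := by
    calc s * ⟪T x, x⟫ ≤ s * |⟪T x, x⟫| := by gcongr; exact le_abs_self _
      _ < s * (|⟪T x, x⟫| + 1) := by gcongr; linarith
      _ = -c := div_mul_cancel₀ _ (by positivity)
  refine ⟨s • x, fun i => ?_⟩
  rw [hT.inner_map_add_smul]
  have hui := hu i
  nlinarith

theorem LinearMap.IsSymmetric.exists_forall_inner_map_add_lt [FiniteDimensional ℝ E]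
    (hT : T.IsSymmetric) {ι : Type*} [Finite ι] {u : ι → E}
    (hu : ∀ w ∈ convexHull ℝ (Set.range u), T w ≠ 0) :
    ∃ y, ∀ i, ⟪T (u i + y), u i + y⟫ < ⟪T (u i), u i⟫ := by
  obtain ⟨y, hy, c, hc, hyu⟩ := exists_mem_orthogonal_forall_inner_lt_of_disjoint
    (convex_convexHull ℝ _) ((Set.finite_range u).isCompact_convexHull (𝕜 := ℝ))
    (Submodule.closed_of_finiteDimensional (LinearMap.ker T))
    (Set.disjoint_left.2 fun w hw => hu w hw)
  rw [← hT.orthogonal_range, Submodule.orthogonal_orthogonal] at hy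
  obtain ⟨x, rfl⟩ := hy
  exact hT.exists_forall_inner_map_add_lt_of_forall_inner_lt hc fun i =>
    hyu _ (subset_convexHull ℝ _ (Set.mem_range_self i))

end SymmetricForm

open scoped Pointwise in
theorem zero_mem_convexHull_range_add_neg {E : Type*} [AddCommGroup E] [Module ℝ E] {ι : Type*}
    {u : ι → E} {w : E} (hw : w ∈ convexHull ℝ (Set.range u)) :
    0 ∈ convexHull ℝ (Set.range fun i => u i + -w) := by
  have : (Set.range fun i => u i + -w) = -w +ᵥ Set.range u := by
    simp only [← Set.range_vadd, vadd_eq_add, add_comm]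
  rw [this, convexHull_vadd, Set.mem_vadd_set_iff_neg_vadd_mem]
  simpa using hw

theorem IsUnitDistRep.add_const {V : Type*} {G : SimpleGraph V} {d : ℕ}
    {u : V → EuclideanSpace ℝ (Fin d)} (hu : IsUnitDistRep G u) (c : EuclideanSpace ℝ (Fin d)) :
    IsUnitDistRep G fun i => u i + c := fun i j hij => by
  simpa using hu i j hij

section Objective

variable {V : Type*} [Fintype V] (p : ℝ≥0∞) [Fact (1 ≤ p)] {d : ℕ}

theorem objP_eq_norm_inner (A : Matrix (Fin d) (Fin d) ℝ) (u : V → EuclideanSpace ℝ (Fin d)) :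
    objP p A u = ‖WithLp.toLp p fun i => ⟪toEuclideanLin A (u i), u i⟫‖ := by
  simp [objP, EuclideanSpace.inner_eq_star_dotProduct]

theorem objP_lt_objP [Nonempty V] {A : Matrix (Fin d) (Fin d) ℝ} (hA : A.PosSemidef)
    {u v : V → EuclideanSpace ℝ (Fin d)}
    (h : ∀ i, ⟪toEuclideanLin A (v i), v i⟫ < ⟪toEuclideanLin A (u i), u i⟫) :
    objP p A v < objP p A u := by
  have hT := Matrix.isPositive_toEuclideanLin_iff.2 hA
  rw [objP_eq_norm_inner, objP_eq_norm_inner]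
  refine PiLp.norm_lt_norm_of_forall_norm_lt p fun i => ?_
  simp only [Real.norm_of_nonneg (hT.inner_nonneg_left _)]
  exact h i

end Objective

/-- If `u` attains `𝓔_p(G;A)` for a connected graph `G`, then there is an optimal
unit-distance representation `v` with the same objective value whose convex hull
contains the origin. -/
theorem ellipsoid_optimal_zero_mem_convexHull {V : Type*} [Fintype V]
    (G : SimpleGraph V) (hG : G.Connected) {d : ℕ}
    (A : Matrix (Fin d) (Fin d) ℝ) (hA : A.PosSemidef)
    (p : ℝ≥0∞) [Fact (1 ≤ p)]
    (u : V → EuclideanSpace ℝ (Fin d)) (hu : IsUnitDistRep G u)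
    (hopt : objP p A u = sInf {r : ℝ | ∃ u' : V → EuclideanSpace ℝ (Fin d),
      IsUnitDistRep G u' ∧ r = objP p A u'}) :
    ∃ v : V → EuclideanSpace ℝ (Fin d), IsUnitDistRep G v ∧
      objP p A v = objP p A u ∧
      (0 : EuclideanSpace ℝ (Fin d)) ∈ convexHull ℝ (Set.range v) := by
  have hT := Matrix.isPositive_toEuclideanLin_iff.2 hA
  by_cases hker : ∃ w ∈ convexHull ℝ (Set.range u), toEuclideanLin A w = 0
  · obtain ⟨w, hw, hAw⟩ := hker
    refine ⟨fun i => u i + -w, hu.add_const (-w), ?_, zero_mem_convexHull_range_add_neg hw⟩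
    simp only [objP_eq_norm_inner,
      hT.isSymmetric.inner_map_add_of_map_eq_zero _ (by rw [map_neg, hAw, neg_zero])]
  · push Not at hker
    have : Nonempty V := hG.nonempty
    obtain ⟨x, hx⟩ := hT.isSymmetric.exists_forall_inner_map_add_lt hker
    have hlt := objP_lt_objP p hA hx
    have hle : objP p A u ≤ objP p A (fun i => u i + x) :=
      hopt ▸ csInf_le ⟨0, by rintro _ ⟨v, -, rfl⟩; exact norm_nonneg _⟩ ⟨_, hu.add_const x, rfl⟩
    exact absurd hle hlt.not_ge
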